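/- Let A be a unital C*-algebra, B a commutative unital C*-algebra, φ : A → B a positive contractive linear map, and f a convex function on an open interval I containing 0 with f(0) ≤ 0. Then for every self-adjoint a ∈ A with spectrum in I, f(φ(a)) ≤ φ(f(a)). -/

import Mathlib

/-!
Since `B` is commutative, `b ≥ 0` iff `χ b ≥ 0` for every character `χ` (Gelfand), and
`χ (f (φ a)) = f (χ (φ a))`. So it suffices to prove `f (ψ a) ≤ ψ (f a)` for the positive
functional `ψ = χ ∘ φ`, which has `t = ψ 1 ∈ [0, 1]`. Then `x = ψ a` lies in
`t • [min σ(a), max σ(a)]`, which is in `I` because `0 ∈ I`. A supporting line `ℓ` of `f` at `x`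
lies below `f` on `σ(a)`, hence `ψ (f a) ≥ ψ (ℓ a) = t ℓ(0) + (ℓ(x) - ℓ(0)) ≥ ℓ(x) = f x`,
the last step since `ℓ(0) ≤ f 0 ≤ 0`.
-/

open scoped ComplexOrder
open WeakDual Set

theorem ConvexOn.add_rightDeriv_mul_sub_le {S : Set ℝ} {f : ℝ → ℝ} (hf : ConvexOn ℝ S f)
    {x y : ℝ} (hx : x ∈ interior S) (hy : y ∈ S) :
    f x + derivWithin f (Ioi x) x * (y - x) ≤ f y := by
  rcases lt_trichotomy y x with hyx | rfl | hxy
  · have hslope := (hf.slope_le_leftDeriv_of_mem_interior hy hx hyx).trans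
      (hf.leftDeriv_le_rightDeriv_of_mem_interior hx)
    rw [slope_def_field, div_le_iff₀ (sub_pos.mpr hyx)] at hslope
    nlinarith
  · simp
  · have hslope := hf.rightDeriv_le_slope_of_mem_interior hx hy hxy
    rw [slope_def_field, le_div_iff₀ (sub_pos.mpr hxy)] at hslope
    linarith

theorem CommCStarAlgebra.nonneg_iff_forall_characterSpace {B : Type*} [CommCStarAlgebra B]
    [PartialOrder B] [StarOrderedRing B] {b : B} :
    0 ≤ b ↔ ∀ χ : characterSpace ℂ B, 0 ≤ χ b := by
  rw [← map_le_map_iff (gelfandStarTransform B), map_zero, ContinuousMap.le_def]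
  rfl

namespace PositiveLinearMap

variable {A : Type*} [CStarAlgebra A] [PartialOrder A] [StarOrderedRing A] (ψ : A →ₚ[ℂ] ℂ)

theorem exists_apply_eq_ofReal_of_isSelfAdjoint {a : A} (ha : IsSelfAdjoint a) :
    ∃ x : ℝ, ψ a = x :=
  Complex.conj_eq_iff_real.mp (ha.map' ψ)

theorem exists_apply_eq_ofReal_mem (hψ1 : ψ 1 ≤ 1) {I : Set ℝ} (hI : Convex ℝ I)
    (h0I : (0 : ℝ) ∈ I) {a : A} (ha : IsSelfAdjoint a) (hspec : spectrum ℝ a ⊆ I) :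
    ∃ x ∈ I, ψ a = x := by
  obtain ⟨x, hx⟩ := ψ.exists_apply_eq_ofReal_of_isSelfAdjoint ha
  refine ⟨x, ?_, hx⟩
  rcases subsingleton_or_nontrivial A with hA | hA
  · rw [Subsingleton.elim a 0, map_zero, eq_comm, Complex.ofReal_eq_zero] at hx
    exact hx ▸ h0I
  obtain ⟨t, ht⟩ := ψ.exists_apply_eq_ofReal_of_isSelfAdjoint (.one A)
  have ht0 : 0 ≤ t := Complex.zero_le_real.mp (ht ▸ ψ.map_nonneg zero_le_one)
  have ht1 : t ≤ 1 := Complex.real_le_real.mp (by simpa [ht] using hψ1)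
  have hψ_algebraMap (r : ℝ) : ψ (algebraMap ℝ A r) = (t * r : ℝ) := by
    rw [Algebra.algebraMap_eq_smul_one, map_smul_of_tower, ht, Complex.real_smul]
    push_cast; ring
  have hcpt := spectrum.isCompact (𝕜 := ℝ) a
  have hne := ContinuousFunctionalCalculus.spectrum_nonempty (R := ℝ) a ha
  have hlo : algebraMap ℝ A (sInf (spectrum ℝ a)) ≤ a :=
    (algebraMap_le_iff_le_spectrum ha).mpr fun _ hy => csInf_le hcpt.bddBelow hy
  have hhi : a ≤ algebraMap ℝ A (sSup (spectrum ℝ a)) :=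
    (le_algebraMap_iff_spectrum_le ha).mpr fun _ hy => le_csSup hcpt.bddAbove hy
  have hlo' := OrderHomClass.mono ψ hlo
  have hhi' := OrderHomClass.mono ψ hhi
  rw [hψ_algebraMap, hx, Complex.real_le_real] at hlo' hhi'
  have hmem (r : ℝ) (hr : r ∈ I) : t * r ∈ I := (hI.starConvex h0I).smul_mem hr ht0 ht1
  exact hI.ordConnected.out (hmem _ (hspec (hcpt.sInf_mem hne)))
    (hmem _ (hspec (hcpt.sSup_mem hne))) ⟨hlo', hhi'⟩

theorem ofReal_le_apply_cfc (hψ1 : ψ 1 ≤ 1) {I : Set ℝ} (hI : IsOpen I) {f : ℝ → ℝ}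
    (hf : ConvexOn ℝ I f) (h0I : (0 : ℝ) ∈ I) (hf0 : f 0 ≤ 0) {a : A} (ha : IsSelfAdjoint a)
    (hspec : spectrum ℝ a ⊆ I) {x : ℝ} (hxI : x ∈ I) (hx : ψ a = x) :
    (f x : ℂ) ≤ ψ (cfc f a) := by
  set c := derivWithin f (Ioi x) x
  have hsupp (y : ℝ) (hy : y ∈ I) : f x + c * (y - x) ≤ f y :=
    hf.add_rightDeriv_mul_sub_le (by rwa [hI.interior_eq]) hy
  have hcfc_ge : algebraMap ℝ A (f x - c * x) + c • a ≤ cfc f a := by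
    calc algebraMap ℝ A (f x - c * x) + c • a = cfc (fun y => (f x - c * x) + c * y) a := by
          rw [cfc_const_add _ _ _ (by fun_prop) ha, cfc_const_mul c (fun y : ℝ => y) a,
            cfc_id' ℝ a ha]
      _ ≤ cfc f a := cfc_mono (fun y hy => by linarith [hsupp y (hspec hy)])
          (hg := (hf.continuousOn hI).mono hspec)
  have hneg : ((f x - c * x : ℝ) : ℂ) ≤ 0 := by
    exact_mod_cast (by linarith [hsupp 0 h0I] : f x - c * x ≤ 0)
  calc (f x : ℂ) = (f x - c * x : ℝ) * 1 + c * x := by push_cast; ring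
    _ ≤ (f x - c * x : ℝ) * ψ 1 + c * x := by
      gcongr ?_ + _
      exact mul_le_mul_of_nonpos_left hψ1 hneg
    _ = ψ (algebraMap ℝ A (f x - c * x) + c • a) := by
      rw [map_add, Algebra.algebraMap_eq_smul_one, map_smul_of_tower, map_smul_of_tower, hx,
        Complex.real_smul, Complex.real_smul]
    _ ≤ ψ (cfc f a) := OrderHomClass.mono ψ hcfc_ge

end PositiveLinearMap

theorem jensen_commutative_codomain_contractive {A B : Type*}
    [CStarAlgebra A] [PartialOrder A] [StarOrderedRing A]
    [CommCStarAlgebra B] [PartialOrder B] [StarOrderedRing B]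
    (φ : A →ₗ[ℂ] B) (hφ_pos : ∀ x : A, 0 ≤ x → 0 ≤ φ x) (hφ_contr : φ 1 ≤ 1)
    (I : Set ℝ) (hI_open : IsOpen I)
    (f : ℝ → ℝ) (hf : ConvexOn ℝ I f) (h0I : (0 : ℝ) ∈ I) (hf0 : f 0 ≤ 0)
    (a : A) (ha : IsSelfAdjoint a) (hspec : spectrum ℝ a ⊆ I) :
    cfc f (φ a) ≤ φ (cfc f a) := by
  let Φ := PositiveLinearMap.mk₀ φ hφ_pos
  have hjensen (χ : characterSpace ℂ B) :
      ∃ x ∈ I, χ (φ a) = x ∧ (f x : ℂ) ≤ χ (φ (cfc f a)) := by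
    let ψ := (PositiveLinearMap.ofClass χ).comp Φ
    have hψ1 : ψ 1 ≤ 1 := (OrderHomClass.mono χ hφ_contr).trans_eq (map_one χ)
    obtain ⟨x, hxI, hx⟩ := ψ.exists_apply_eq_ofReal_mem hψ1 hf.1 h0I ha hspec
    exact ⟨x, hxI, hx, ψ.ofReal_le_apply_cfc hψ1 hI_open hf h0I hf0 ha hspec hxI hx⟩
  have hφa : IsSelfAdjoint (φ a) := ha.map' Φ
  have hspec_φa : spectrum ℝ (φ a) ⊆ I := by
    intro y hy
    obtain ⟨χ, hχ⟩ :=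
      CharacterSpace.mem_spectrum_iff_exists.mp (spectrum.algebraMap_mem ℂ hy)
    obtain ⟨x, hxI, hx, -⟩ := hjensen χ
    have hyx : y = x := Complex.ofReal_injective (hχ.symm.trans hx)
    exact hyx ▸ hxI
  rw [← sub_nonneg, CommCStarAlgebra.nonneg_iff_forall_characterSpace]
  intro χ
  obtain ⟨x, -, hx, hfx⟩ := hjensen χ
  have hχ_cfc : χ (cfc f (φ a)) = f x := by
    rw [StarAlgHomClass.map_cfc χ f (φ a) ((hf.continuousOn hI_open).mono hspec_φa)
      (hφa := hφa.map χ), hx]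
    exact cfc_algebraMap x f
  rw [map_sub, hχ_cfc]
  exact sub_nonneg.mpr hfx
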